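/- arXiv:1506.03058 — 3 statements merged into one kernel-verified Lean document; each statement's English description precedes it below -/
import Mathlib

section
/- Define for a two-input-two-output correlation P the signaling deficits δ_I = (P_{01|10}+P_{11|10}) − (P_{01|00}+P_{11|00}), etc., as in the no-signaling conditions. If P lies in the convex hull of the eight 0-bit boxes d^{j_0} and the eight 1-bit boxes d^{j_1}, with weights p^0_j and p^1_j, then δ_I = p^1_3 − p^1_0, δ_II = p^1_2 − p^1_1, δ_III = p^1_7 − p^1_4, δ_IV = p^1_6 − p^1_5; in particular, P is operationally non-signaling if and only if each box–antibox pair of 1-bit boxes appears with balanced weights. -/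
/-- Deterministic box given output functions `X`, `Y` of the inputs `a b`. -/
def dbox (X Y : Bool → Bool → Bool) (x y a b : Bool) : ℝ :=
  if x = X a b ∧ y = Y a b then 1 else 0

/-- Correlator `E(a,b) = ∑_{x,y} (-1)^{x⊕y} P_{xy|ab}`. -/
def corrE (P : Bool → Bool → Bool → Bool → ℝ) (a b : Bool) : ℝ :=
  ∑ x : Bool, ∑ y : Bool, (if x = y then (1 : ℝ) else -1) * P x y a b

/-- CHSH quantity `Λ(P) = E(0,0) + E(0,1) − E(1,0) + E(1,1)`. -/
def chsh (P : Bool → Bool → Bool → Bool → ℝ) : ℝ :=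
  corrE P false false + corrE P false true - corrE P true false + corrE P true true

/-- Alice's marginal `P_{x|ab}`. -/
def margA (P : Bool → Bool → Bool → Bool → ℝ) (x a b : Bool) : ℝ := ∑ y : Bool, P x y a b

/-- Bob's marginal `P_{y|ab}`. -/
def margB (P : Bool → Bool → Bool → Bool → ℝ) (y a b : Bool) : ℝ := ∑ x : Bool, P x y a b

/-- Operational no-signaling conditions: `P_{x|ab} = P_{x|a}` and `P_{y|ab} = P_{y|b}`. -/
def nosig (P : Bool → Bool → Bool → Bool → ℝ) : Prop :=
  (∀ x a b b', margA P x a b = margA P x a b') ∧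
  (∀ y a a' b, margB P y a b = margB P y a' b)

/-- The eight deterministic 0-bit (local) boxes `d^{j_0}` of Table II (`Λ = +2`). -/
def box0 : Fin 8 → Bool → Bool → Bool → Bool → ℝ :=
  ![dbox (fun _ _ => false) (fun _ _ => false),
    dbox (fun a _ => a) (fun _ _ => false),
    dbox (fun _ _ => false) (fun _ b => !b),
    dbox (fun a _ => !a) (fun _ b => !b),
    dbox (fun a _ => a) (fun _ b => b),
    dbox (fun _ _ => true) (fun _ b => b),
    dbox (fun a _ => !a) (fun _ _ => true),
    dbox (fun _ _ => true) (fun _ _ => true)]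

/-- The eight deterministic 1-bit boxes `d^{j_1}` of Table I (`Λ = +4`),
paired into box/antibox pairs `(0,3), (1,2), (4,7), (5,6)`. -/
def box1 : Fin 8 → Bool → Bool → Bool → Bool → ℝ :=
  ![dbox (fun _ _ => false) (fun a b => a && !b),
    dbox (fun a _ => !a) (fun a b => Bool.xor (!a) (a && !b)),
    dbox (fun a _ => a) (fun a b => Bool.xor a (a && !b)),
    dbox (fun _ _ => true) (fun a b => !(a && !b)),
    dbox (fun a b => a && !b) (fun _ _ => false),
    dbox (fun a b => !a && !b) (fun a b => Bool.xor (!a && !b) (a && !b)),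
    dbox (fun a b => a || b) (fun _ b => b),
    dbox (fun a b => !(a && !b)) (fun _ _ => true)]

@[simp] lemma box0_apply_0 : box0 0 = dbox (fun _ _ => false) (fun _ _ => false) := rfl
@[simp] lemma box0_apply_1 : box0 1 = dbox (fun a _ => a) (fun _ _ => false) := rfl
@[simp] lemma box0_apply_2 : box0 2 = dbox (fun _ _ => false) (fun _ b => !b) := rfl
@[simp] lemma box0_apply_3 : box0 3 = dbox (fun a _ => !a) (fun _ b => !b) := rfl
@[simp] lemma box0_apply_4 : box0 4 = dbox (fun a _ => a) (fun _ b => b) := rfl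
@[simp] lemma box0_apply_5 : box0 5 = dbox (fun _ _ => true) (fun _ b => b) := rfl
@[simp] lemma box0_apply_6 : box0 6 = dbox (fun a _ => !a) (fun _ _ => true) := rfl
@[simp] lemma box0_apply_7 : box0 7 = dbox (fun _ _ => true) (fun _ _ => true) := rfl
@[simp] lemma box1_apply_0 : box1 0 = dbox (fun _ _ => false) (fun a b => a && !b) := rfl
@[simp] lemma box1_apply_1 : box1 1 = dbox (fun a _ => !a) (fun a b => Bool.xor (!a) (a && !b)) := rfl
@[simp] lemma box1_apply_2 : box1 2 = dbox (fun a _ => a) (fun a b => Bool.xor a (a && !b)) := rfl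
@[simp] lemma box1_apply_3 : box1 3 = dbox (fun _ _ => true) (fun a b => !(a && !b)) := rfl
@[simp] lemma box1_apply_4 : box1 4 = dbox (fun a b => a && !b) (fun _ _ => false) := rfl
@[simp] lemma box1_apply_5 : box1 5 = dbox (fun a b => !a && !b) (fun a b => Bool.xor (!a && !b) (a && !b)) := rfl
@[simp] lemma box1_apply_6 : box1 6 = dbox (fun a b => a || b) (fun _ b => b) := rfl
@[simp] lemma box1_apply_7 : box1 7 = dbox (fun a b => !(a && !b)) (fun _ _ => true) := rfl

/-- if `P` is a convex combination of the eight 0-bit boxes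
`d^{j_0}` and the eight 1-bit boxes `d^{j_1}` with weights `p⁰_j, p¹_j`, then the
signaling deficits of the no-signaling conditions satisfy `δ_I = p¹_3 − p¹_0`,
`δ_II = p¹_2 − p¹_1`, `δ_III = p¹_7 − p¹_4`, `δ_IV = p¹_6 − p¹_5`; in particular
`P` is operationally non-signaling iff each box–antibox pair of 1-bit boxes
appears with balanced weights. -/
theorem signaling_deficits_of_decomposition (p0 p1 : Fin 8 → ℝ)
    (h0 : ∀ j, 0 ≤ p0 j) (h1 : ∀ j, 0 ≤ p1 j)
    (hsum : ∑ j, p0 j + ∑ j, p1 j = 1)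
    (P : Bool → Bool → Bool → Bool → ℝ)
    (hP : ∀ x y a b, P x y a b = ∑ j, p0 j * box0 j x y a b + ∑ j, p1 j * box1 j x y a b) :
    margB P false true false - margB P false false false = p1 3 - p1 0 ∧
    margB P false false true - margB P false true true = p1 2 - p1 1 ∧
    margA P false true false - margA P false true true = p1 7 - p1 4 ∧
    margA P false false false - margA P false false true = p1 6 - p1 5 ∧
    (nosig P ↔ (p1 3 = p1 0 ∧ p1 2 = p1 1 ∧ p1 7 = p1 4 ∧ p1 6 = p1 5)) := by
  have d1 : margB P false true false - margB P false false false = p1 3 - p1 0 := by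
    simp [margB, hP, Fin.sum_univ_eight, dbox]; ring
  have d2 : margB P false false true - margB P false true true = p1 2 - p1 1 := by
    simp [margB, hP, Fin.sum_univ_eight, dbox]; ring
  have d3 : margA P false true false - margA P false true true = p1 7 - p1 4 := by
    simp [margA, hP, Fin.sum_univ_eight, dbox]; ring
  have d4 : margA P false false false - margA P false false true = p1 6 - p1 5 := by
    simp [margA, hP, Fin.sum_univ_eight, dbox]; ring
  refine ⟨d1, d2, d3, d4, ?_⟩
  constructor
  · rintro ⟨hA, hB⟩
    have e1 := hB false true false false
    have e2 := hB false false true true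
    have e3 := hA false true false true
    have e4 := hA false false false true
    exact ⟨by linarith, by linarith, by linarith, by linarith⟩
  · rintro ⟨h1, h2, h3, h4⟩
    constructor
    · intro x a b b'
      cases x <;> cases a <;> cases b <;> cases b' <;>
        simp [margA, hP, Fin.sum_univ_eight, dbox] <;> linarith
    · intro y a a' b
      cases y <;> cases a <;> cases a' <;> cases b <;>
        simp [margB, hP, Fin.sum_univ_eight, dbox] <;> linarith
end

section
/- Free will implies ontological no-signaling: if P_{B|AXλ} = P_B and P_{A|BYλ} = P_A (for all values, with all conditionals defined), then P_{X|ABλ} = P_{X|Aλ} and P_{Y|ABλ} = P_{Y|Bλ}. -/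
/-- Probability of an event under weights `p` on a finite sample space. -/
noncomputable def pr {Ω : Type*} [Fintype Ω] (p : Ω → ℝ) (E : Set Ω) : ℝ :=
  ∑ ω, E.indicator p ω

/-- Conditional probability `Pr(E | F)`. -/
noncomputable def condPr {Ω : Type*} [Fintype Ω] (p : Ω → ℝ) (E F : Set Ω) : ℝ :=
  pr p (E ∩ F) / pr p F

open scoped Classical

lemma pr_eq_sum_filter {Ω : Type*} [Fintype Ω] (p : Ω → ℝ) (E : Set Ω) :
    pr p E = ∑ ω ∈ Finset.univ.filter (· ∈ E), p ω := by
  classical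
  rw [Finset.sum_filter]
  simp [pr, Set.indicator_apply]

lemma pr_marg {Ω ι : Type*} [Fintype Ω] (p : Ω → ℝ) (S : Set Ω) (X : Ω → ι) :
    pr p S = ∑ x ∈ Finset.univ.image X, pr p (S ∩ {ω | X ω = x}) := by
  classical
  rw [pr_eq_sum_filter]
  rw [← Finset.sum_fiberwise_of_maps_to (g := X) (t := Finset.univ.image X)
    (fun ω _ => Finset.mem_image_of_mem X (Finset.mem_univ ω))]
  refine Finset.sum_congr rfl fun x _ => ?_
  rw [pr_eq_sum_filter, Finset.filter_filter]
  refine Finset.sum_congr ?_ fun _ _ => rfl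
  ext ω; simp [Set.mem_inter_iff]

lemma freeWill_key {Ω ιA ιB ιX ιL : Type*} [Fintype Ω] (p : Ω → ℝ)
    (A : Ω → ιA) (B : Ω → ιB) (X : Ω → ιX) (L : Ω → ιL)
    (hposAX : ∀ a x ℓ, 0 < pr p {ω | A ω = a ∧ X ω = x ∧ L ω = ℓ})
    (hposAB : ∀ a b ℓ, 0 < pr p {ω | A ω = a ∧ B ω = b ∧ L ω = ℓ})
    (hposA : ∀ a ℓ, 0 < pr p {ω | A ω = a ∧ L ω = ℓ})
    (hB : ∀ a b x ℓ,
      condPr p {ω | B ω = b} {ω | A ω = a ∧ X ω = x ∧ L ω = ℓ} = pr p {ω | B ω = b}) :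
    ∀ a b x ℓ, condPr p {ω | X ω = x} {ω | A ω = a ∧ B ω = b ∧ L ω = ℓ}
      = condPr p {ω | X ω = x} {ω | A ω = a ∧ L ω = ℓ} := by
  intro a b x ℓ
  have hBprod : ∀ x', pr p ({ω | B ω = b} ∩ {ω | A ω = a ∧ X ω = x' ∧ L ω = ℓ})
      = pr p {ω | B ω = b} * pr p {ω | A ω = a ∧ X ω = x' ∧ L ω = ℓ} := by
    intro x'
    have h := hB a b x' ℓ
    rw [condPr, div_eq_iff (hposAX a x' ℓ).ne'] at h
    exact h
  have hmargB : pr p ({ω | B ω = b} ∩ {ω | A ω = a ∧ L ω = ℓ})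
      = pr p {ω | B ω = b} * pr p {ω | A ω = a ∧ L ω = ℓ} := by
    rw [pr_marg p ({ω | B ω = b} ∩ {ω | A ω = a ∧ L ω = ℓ}) X,
        pr_marg p {ω | A ω = a ∧ L ω = ℓ} X, Finset.mul_sum]
    refine Finset.sum_congr rfl fun x' _ => ?_
    have h1 : ({ω | B ω = b} ∩ {ω | A ω = a ∧ L ω = ℓ}) ∩ {ω | X ω = x'}
        = {ω | B ω = b} ∩ {ω | A ω = a ∧ X ω = x' ∧ L ω = ℓ} := by
      ext ω; simp only [Set.mem_inter_iff, Set.mem_setOf_eq]; tauto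
    have h2 : {ω | A ω = a ∧ L ω = ℓ} ∩ {ω | X ω = x'}
        = {ω | A ω = a ∧ X ω = x' ∧ L ω = ℓ} := by
      ext ω; simp only [Set.mem_inter_iff, Set.mem_setOf_eq]; tauto
    rw [h1, h2, hBprod x']
  have hABset : {ω | A ω = a ∧ B ω = b ∧ L ω = ℓ}
      = {ω | B ω = b} ∩ {ω | A ω = a ∧ L ω = ℓ} := by
    ext ω; simp only [Set.mem_inter_iff, Set.mem_setOf_eq]; tauto
  have hAB : pr p {ω | A ω = a ∧ B ω = b ∧ L ω = ℓ}
      = pr p {ω | B ω = b} * pr p {ω | A ω = a ∧ L ω = ℓ} := by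
    rw [hABset, hmargB]
  have hXABset : {ω | X ω = x} ∩ {ω | A ω = a ∧ B ω = b ∧ L ω = ℓ}
      = {ω | B ω = b} ∩ {ω | A ω = a ∧ X ω = x ∧ L ω = ℓ} := by
    ext ω; simp only [Set.mem_inter_iff, Set.mem_setOf_eq]; tauto
  have hXAset : {ω | X ω = x} ∩ {ω | A ω = a ∧ L ω = ℓ}
      = {ω | A ω = a ∧ X ω = x ∧ L ω = ℓ} := by
    ext ω; simp only [Set.mem_inter_iff, Set.mem_setOf_eq]; tauto
  have hb : 0 < pr p {ω | B ω = b} := by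
    have h1 := hposAB a b ℓ
    rw [hAB] at h1
    nlinarith [hposA a ℓ]
  rw [condPr, condPr, hXABset, hXAset, hBprod x, hAB,
    mul_div_mul_left _ _ hb.ne']

/-- free will implies ontological no-signaling. If
`P(B|A,X,λ) = P(B)` and `P(A|B,Y,λ) = P(A)` (all conditioning events having
positive probability), then `P(X|A,B,λ) = P(X|A,λ)` and `P(Y|A,B,λ) = P(Y|B,λ)`. -/
theorem freeWill_implies_ontological_nosignaling
    {Ω ιA ιB ιX ιY ιL : Type*} [Fintype Ω]
    (p : Ω → ℝ) (hp : ∀ ω, 0 ≤ p ω) (hsum : ∑ ω, p ω = 1)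
    (A : Ω → ιA) (B : Ω → ιB) (X : Ω → ιX) (Y : Ω → ιY) (L : Ω → ιL)
    (hposAX : ∀ (a : ιA) (x : ιX) (ℓ : ιL), 0 < pr p {ω | A ω = a ∧ X ω = x ∧ L ω = ℓ})
    (hposBY : ∀ (b : ιB) (y : ιY) (ℓ : ιL), 0 < pr p {ω | B ω = b ∧ Y ω = y ∧ L ω = ℓ})
    (hposAB : ∀ (a : ιA) (b : ιB) (ℓ : ιL), 0 < pr p {ω | A ω = a ∧ B ω = b ∧ L ω = ℓ})
    (hposA : ∀ (a : ιA) (ℓ : ιL), 0 < pr p {ω | A ω = a ∧ L ω = ℓ})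
    (hposB : ∀ (b : ιB) (ℓ : ιL), 0 < pr p {ω | B ω = b ∧ L ω = ℓ})
    (hB : ∀ (a : ιA) (b : ιB) (x : ιX) (ℓ : ιL),
      condPr p {ω | B ω = b} {ω | A ω = a ∧ X ω = x ∧ L ω = ℓ} = pr p {ω | B ω = b})
    (hA : ∀ (a : ιA) (b : ιB) (y : ιY) (ℓ : ιL),
      condPr p {ω | A ω = a} {ω | B ω = b ∧ Y ω = y ∧ L ω = ℓ} = pr p {ω | A ω = a}) :
    (∀ (a : ιA) (b : ιB) (x : ιX) (ℓ : ιL),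
      condPr p {ω | X ω = x} {ω | A ω = a ∧ B ω = b ∧ L ω = ℓ} =
      condPr p {ω | X ω = x} {ω | A ω = a ∧ L ω = ℓ}) ∧
    (∀ (a : ιA) (b : ιB) (y : ιY) (ℓ : ιL),
      condPr p {ω | Y ω = y} {ω | A ω = a ∧ B ω = b ∧ L ω = ℓ} =
      condPr p {ω | Y ω = y} {ω | B ω = b ∧ L ω = ℓ}) := by
  constructor
  · exact freeWill_key p A B X L hposAX hposAB hposA hB
  · intro a b y ℓ
    have hposBA : ∀ b' a' ℓ', 0 < pr p {ω | B ω = b' ∧ A ω = a' ∧ L ω = ℓ'} := by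
      intro b' a' ℓ'
      have hs : {ω | B ω = b' ∧ A ω = a' ∧ L ω = ℓ'}
          = {ω | A ω = a' ∧ B ω = b' ∧ L ω = ℓ'} := by
        ext ω; simp only [Set.mem_setOf_eq]; tauto
      rw [hs]; exact hposAB a' b' ℓ'
    have h2 := freeWill_key p B A Y L hposBY hposBA hposB
      (fun b' a' y' ℓ' => hA a' b' y' ℓ') b a y ℓ
    have hs : {ω | A ω = a ∧ B ω = b ∧ L ω = ℓ}
        = {ω | B ω = b ∧ A ω = a ∧ L ω = ℓ} := by
      ext ω; simp only [Set.mem_setOf_eq]; tauto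
    rw [hs]; exact h2
end

section
/- Spontaneity implies operational no-signaling: if P_{B|AX} = P_B and P_{A|BY} = P_A (for all values, with all conditionals defined), then P_{X|AB} = P_{X|A} and P_{Y|AB} = P_{Y|B}. -/
open Classical in
lemma pr_eq_filter {Ω : Type*} [Fintype Ω] (p : Ω → ℝ) (Q : Ω → Prop) :
    pr p {ω | Q ω} = ∑ ω ∈ Finset.univ.filter (fun ω => Q ω), p ω := by
  rw [Finset.sum_filter, pr]
  refine Finset.sum_congr rfl fun ω _ => ?_
  simp [Set.indicator_apply]

open Classical in
lemma pr_fiber {Ω ι : Type*} [Fintype Ω] (p : Ω → ℝ) (Q : Ω → Prop) (X : Ω → ι) :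
    pr p {ω | Q ω} = ∑ x ∈ Finset.univ.image X, pr p {ω | Q ω ∧ X ω = x} := by
  rw [pr_eq_filter p Q]
  rw [← Finset.sum_fiberwise_of_maps_to (g := X) (t := Finset.univ.image X)
    (fun ω _ => Finset.mem_image_of_mem X (Finset.mem_univ ω))]
  refine Finset.sum_congr rfl fun x _ => ?_
  rw [pr_eq_filter p (fun ω => Q ω ∧ X ω = x), Finset.filter_filter]
  exact Finset.sum_congr (by congr) fun _ _ => rfl

/-- spontaneity implies operational no-signaling. If
`P(B|A,X) = P(B)` and `P(A|B,Y) = P(A)` (all conditioning events having positive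
probability), then `P(X|A,B) = P(X|A)` and `P(Y|A,B) = P(Y|B)`. -/
theorem spontaneity_implies_operational_nosignaling
    {Ω ιA ιB ιX ιY : Type*} [Fintype Ω]
    (p : Ω → ℝ) (hp : ∀ ω, 0 ≤ p ω) (hsum : ∑ ω, p ω = 1)
    (A : Ω → ιA) (B : Ω → ιB) (X : Ω → ιX) (Y : Ω → ιY)
    (hposAX : ∀ (a : ιA) (x : ιX), 0 < pr p {ω | A ω = a ∧ X ω = x})
    (hposBY : ∀ (b : ιB) (y : ιY), 0 < pr p {ω | B ω = b ∧ Y ω = y})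
    (hposAB : ∀ (a : ιA) (b : ιB), 0 < pr p {ω | A ω = a ∧ B ω = b})
    (hposA : ∀ (a : ιA), 0 < pr p {ω | A ω = a})
    (hposB : ∀ (b : ιB), 0 < pr p {ω | B ω = b})
    (hB : ∀ (a : ιA) (b : ιB) (x : ιX),
      condPr p {ω | B ω = b} {ω | A ω = a ∧ X ω = x} = pr p {ω | B ω = b})
    (hA : ∀ (a : ιA) (b : ιB) (y : ιY),
      condPr p {ω | A ω = a} {ω | B ω = b ∧ Y ω = y} = pr p {ω | A ω = a}) :
    (∀ (a : ιA) (b : ιB) (x : ιX),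
      condPr p {ω | X ω = x} {ω | A ω = a ∧ B ω = b} =
      condPr p {ω | X ω = x} {ω | A ω = a}) ∧
    (∀ (a : ιA) (b : ιB) (y : ιY),
      condPr p {ω | Y ω = y} {ω | A ω = a ∧ B ω = b} =
      condPr p {ω | Y ω = y} {ω | B ω = b}) := by
  classical
  -- product form of the hypotheses
  have h1 : ∀ (a : ιA) (b : ιB) (x : ιX),
      pr p ({ω | B ω = b} ∩ {ω | A ω = a ∧ X ω = x}) =
      pr p {ω | B ω = b} * pr p {ω | A ω = a ∧ X ω = x} := by
    intro a b x
    have := hB a b x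
    rw [condPr, div_eq_iff (hposAX a x).ne'] at this
    exact this
  have h2 : ∀ (a : ιA) (b : ιB) (y : ιY),
      pr p ({ω | A ω = a} ∩ {ω | B ω = b ∧ Y ω = y}) =
      pr p {ω | A ω = a} * pr p {ω | B ω = b ∧ Y ω = y} := by
    intro a b y
    have := hA a b y
    rw [condPr, div_eq_iff (hposBY b y).ne'] at this
    exact this
  -- independence of A and B
  have hind : ∀ (a : ιA) (b : ιB),
      pr p {ω | A ω = a ∧ B ω = b} = pr p {ω | A ω = a} * pr p {ω | B ω = b} := by
    intro a b
    rw [pr_fiber p (fun ω => A ω = a ∧ B ω = b) X, pr_fiber p (fun ω => A ω = a) X,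
      Finset.sum_mul]
    refine Finset.sum_congr rfl fun x _ => ?_
    have hset : {ω | (A ω = a ∧ B ω = b) ∧ X ω = x} =
        {ω | B ω = b} ∩ {ω | A ω = a ∧ X ω = x} := by
      ext ω; simp [Set.mem_inter_iff]; tauto
    rw [hset, h1 a b x, mul_comm]
  constructor
  · intro a b x
    have hset1 : {ω | X ω = x} ∩ {ω | A ω = a ∧ B ω = b} =
        {ω | B ω = b} ∩ {ω | A ω = a ∧ X ω = x} := by
      ext ω; simp [Set.mem_inter_iff]; tauto
    have hset2 : {ω | X ω = x} ∩ {ω | A ω = a} = {ω | A ω = a ∧ X ω = x} := by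
      ext ω; simp [Set.mem_inter_iff]; tauto
    rw [condPr, condPr, hset1, hset2, h1 a b x, hind a b]
    rw [mul_comm (pr p {ω | A ω = a})]
    rw [mul_div_mul_left _ _ (hposB b).ne']
  · intro a b y
    have hset1 : {ω | Y ω = y} ∩ {ω | A ω = a ∧ B ω = b} =
        {ω | A ω = a} ∩ {ω | B ω = b ∧ Y ω = y} := by
      ext ω; simp [Set.mem_inter_iff]; tauto
    have hset2 : {ω | Y ω = y} ∩ {ω | B ω = b} = {ω | B ω = b ∧ Y ω = y} := by
      ext ω; simp [Set.mem_inter_iff]; tauto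
    rw [condPr, condPr, hset1, hset2, h2 a b y, hind a b]
    rw [mul_div_mul_left _ _ (hposA a).ne']
end
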